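/- arXiv:2309.15080 — 4 statements merged into one kernel-verified Lean document; each statement's English description precedes it below -/
import Mathlib

section
/- Let S and P be commuting bounded linear operators on a complex Hilbert space H. Then (S,P) is a Γ-contraction if and only if (0,S,P) is a 𝔓-contraction. -/
open ContinuousLinearMap

noncomputable section

/-- The operator norm of a 2×2 complex matrix, acting on ℂ² with the Euclidean norm. -/
noncomputable def matOpNorm (M : Matrix (Fin 2) (Fin 2) ℂ) : ℝ :=
  ‖Matrix.toEuclideanCLM (𝕜 := ℂ) M‖

/-- The closed pentablock 𝔓̄ ⊆ ℂ³ : the set of (a₂₁, tr A₀, det A₀) over 2×2 matrices A₀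
of operator norm at most 1. -/
def pentablock : Set (ℂ × ℂ × ℂ) :=
  {x | ∃ M : Matrix (Fin 2) (Fin 2) ℂ, matOpNorm M ≤ 1 ∧ x = (M 1 0, M.trace, M.det)}

/-- The closed symmetrized bidisc Γ ⊆ ℂ². -/
def symBidisc : Set (ℂ × ℂ) :=
  {x | ∃ z w : ℂ, ‖z‖ ≤ 1 ∧ ‖w‖ ≤ 1 ∧ x = (z + w, z * w)}

/-- sup of |f| over a subset of ℂ³, for a polynomial f in three variables. -/
noncomputable def supAbs3 (X : Set (ℂ × ℂ × ℂ)) (f : MvPolynomial (Fin 3) ℂ) : ℝ :=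
  sSup ((fun z : ℂ × ℂ × ℂ => ‖MvPolynomial.eval ![z.1, z.2.1, z.2.2] f‖) '' X)

/-- sup of |g| over a subset of ℂ², for a polynomial g in two variables. -/
noncomputable def supAbs2 (X : Set (ℂ × ℂ)) (g : MvPolynomial (Fin 2) ℂ) : ℝ :=
  sSup ((fun z : ℂ × ℂ => ‖MvPolynomial.eval ![z.1, z.2] g‖) '' X)

variable {H : Type*} [NormedAddCommGroup H] [InnerProductSpace ℂ H]

/-- Evaluation f(A,S,P) of a three-variable polynomial at a commuting triple of operators. -/
noncomputable def opEval3 (A S P : H →L[ℂ] H) (f : MvPolynomial (Fin 3) ℂ) : H →L[ℂ] H :=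
  ∑ m ∈ f.support, f.coeff m • (A ^ m 0 * S ^ m 1 * P ^ m 2)

/-- Evaluation g(S,P) of a two-variable polynomial at a commuting pair of operators. -/
noncomputable def opEval2 (S P : H →L[ℂ] H) (g : MvPolynomial (Fin 2) ℂ) : H →L[ℂ] H :=
  ∑ m ∈ g.support, g.coeff m • (S ^ m 0 * P ^ m 1)

/-- A commuting triple (A,S,P) is a 𝔓-contraction if the von Neumann inequality over the
closed pentablock holds for every polynomial in three variables. -/
def IsPContraction (A S P : H →L[ℂ] H) : Prop :=
  Commute A S ∧ Commute A P ∧ Commute S P ∧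
    ∀ f : MvPolynomial (Fin 3) ℂ, ‖opEval3 A S P f‖ ≤ supAbs3 pentablock f

/-- A commuting pair (S,P) is a Γ-contraction if the von Neumann inequality over the
closed symmetrized bidisc holds for every polynomial in two variables. -/
def IsGammaContraction (S P : H →L[ℂ] H) : Prop :=
  Commute S P ∧
    ∀ g : MvPolynomial (Fin 2) ℂ, ‖opEval2 S P g‖ ≤ supAbs2 symBidisc g

/-!
Evaluating at `A = 0` only sees the slice `f(0, ·, ·)` of a polynomial `f`. The two sets
compare in both directions: `diag(z, w)` puts `{0} × Γ` inside `𝔓̄`, and conversely the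
eigenvalues `z, w` of a contraction `A₀` lie in the closed unit disc with `tr A₀ = z + w`,
`det A₀ = z w`, so the projection of `𝔓̄` to its last two coordinates lies in `Γ`. Hence
`sup_Γ |f(0, ·, ·)| ≤ sup_𝔓̄ |f|`, while a polynomial in `(s, p)` alone satisfies
`sup_𝔓̄ |g| ≤ sup_Γ |g|`, and each von Neumann inequality yields the other.
-/

open MvPolynomial Metric
open scoped Matrix.Norms.L2Operator

section ZeroSlice

variable {R : Type*} [CommSemiring R] {n : ℕ}

def zeroSlice (f : MvPolynomial (Fin (n + 1)) R) : MvPolynomial (Fin n) R :=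
  (finSuccEquiv R n f).coeff 0

lemma coeff_zeroSlice (m : Fin n →₀ ℕ) (f : MvPolynomial (Fin (n + 1)) R) :
    coeff m (zeroSlice f) = coeff (m.cons 0) f :=
  finSuccEquiv_coeff_coeff m f 0

lemma eval_zeroSlice (s : Fin n → R) (f : MvPolynomial (Fin (n + 1)) R) :
    eval s (zeroSlice f) = eval (Fin.cons 0 s) f := by
  rw [eval_eq_eval_mv_eval', ← Polynomial.coeff_zero_eq_eval_zero, Polynomial.coeff_map,
    zeroSlice]

end ZeroSlice

lemma opEval3_zero_left (S P : H →L[ℂ] H) (f : MvPolynomial (Fin 3) ℂ) :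
    opEval3 0 S P f = opEval2 S P (zeroSlice f) := by
  rw [opEval3, opEval2, ← Finset.sum_filter_of_ne (p := fun m => m 0 = 0)]
  · have cons_tail : ∀ m ∈ {m ∈ f.support | m 0 = 0}, Finsupp.cons 0 m.tail = m :=
      fun m hm => (Finset.mem_filter.1 hm).2 ▸ Finsupp.cons_tail m
    refine Finset.sum_nbij' Finsupp.tail (Finsupp.cons 0) (fun m hm => ?_) (fun m hm => ?_)
      cons_tail (fun m _ => Finsupp.tail_cons 0 m) (fun m hm => ?_)
    · rw [mem_support_iff, coeff_zeroSlice, cons_tail m hm, ← mem_support_iff]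
      exact (Finset.mem_filter.1 hm).1
    · simpa [coeff_zeroSlice] using hm
    · rw [coeff_zeroSlice, cons_tail m hm, (Finset.mem_filter.1 hm).2, pow_zero, one_mul]
      rfl
  · intro m _ hm
    contrapose! hm
    rw [zero_pow hm, zero_mul, zero_mul, smul_zero]

lemma opEval3_rename_succ (A S P : H →L[ℂ] H) (g : MvPolynomial (Fin 2) ℂ) :
    opEval3 A S P (rename Fin.succ g) = opEval2 S P g := by
  have hinj : Function.Injective (Fin.succ : Fin 2 → Fin 3) := Fin.succ_injective _
  rw [opEval3, support_rename_of_injective hinj,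
    Finset.sum_image fun _ _ _ _ h => Finsupp.mapDomain_injective hinj h, opEval2]
  refine Finset.sum_congr rfl fun m _ => ?_
  have h0 : (Finsupp.mapDomain Fin.succ m) 0 = 0 :=
    Finsupp.mapDomain_of_notMem_range _ _ fun ⟨i, hi⟩ => Fin.succ_ne_zero i hi
  have h1 : (Finsupp.mapDomain Fin.succ m) 1 = m 0 := Finsupp.mapDomain_apply hinj m 0
  have h2 : (Finsupp.mapDomain Fin.succ m) 2 = m 1 := Finsupp.mapDomain_apply hinj m 1
  rw [coeff_rename_mapDomain _ hinj, h0, h1, h2, pow_zero, one_mul]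

lemma matOpNorm_eq_norm (M : Matrix (Fin 2) (Fin 2) ℂ) : matOpNorm M = ‖M‖ := rfl

lemma norm_le_matOpNorm_of_isRoot_charpoly {M : Matrix (Fin 2) (Fin 2) ℂ} {z : ℂ}
    (hz : M.charpoly.IsRoot z) : ‖z‖ ≤ matOpNorm M :=
  (spectrum.norm_le_norm_of_mem (Matrix.mem_spectrum_of_isRoot_charpoly hz)).trans_eq
    (matOpNorm_eq_norm M).symm

lemma zero_mem_pentablock_of_mem_symBidisc {t d : ℂ} (h : (t, d) ∈ symBidisc) :
    ((0 : ℂ), t, d) ∈ pentablock := by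
  obtain ⟨z, w, hz, hw, h⟩ := h
  refine ⟨Matrix.diagonal ![z, w], ?_, ?_⟩
  · rw [matOpNorm_eq_norm, Matrix.l2_opNorm_diagonal]
    exact (pi_norm_le_iff_of_nonneg zero_le_one).2 (Fin.forall_fin_two.2 ⟨hz, hw⟩)
  · simp_all

lemma mem_symBidisc_of_mem_pentablock {a t d : ℂ} (h : (a, t, d) ∈ pentablock) :
    (t, d) ∈ symBidisc := by
  obtain ⟨M, hM, h⟩ := h
  obtain ⟨-, rfl, rfl⟩ : a = M 1 0 ∧ t = M.trace ∧ d = M.det := by simpa [Prod.ext_iff] using h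
  have hcard : M.charpoly.roots.card = 2 := by
    rw [IsAlgClosed.card_roots_eq_natDegree, Matrix.charpoly_natDegree_eq_dim, Fintype.card_fin]
  obtain ⟨z, w, hzw⟩ := Multiset.card_eq_two.1 hcard
  have hroots : ∀ x ∈ M.charpoly.roots, ‖x‖ ≤ 1 := fun x hx =>
    (norm_le_matOpNorm_of_isRoot_charpoly (Polynomial.isRoot_of_mem_roots hx)).trans hM
  refine ⟨z, w, hroots z (by simp [hzw]), hroots w (by simp [hzw]), ?_⟩
  rw [Matrix.trace_eq_sum_roots_charpoly, Matrix.det_eq_prod_roots_charpoly, hzw]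
  simp

lemma isCompact_symBidisc : IsCompact symBidisc := by
  have : symBidisc =
      (fun p : ℂ × ℂ => (p.1 + p.2, p.1 * p.2)) '' closedBall 0 1 ×ˢ closedBall 0 1 := by
    ext x
    simp [symBidisc, and_assoc, eq_comm]
  rw [this]
  exact ((isCompact_closedBall _ _).prod (isCompact_closedBall _ _)).image (by fun_prop)

lemma isCompact_pentablock : IsCompact pentablock := by
  have : pentablock = (fun M : Matrix (Fin 2) (Fin 2) ℂ => (M 1 0, M.trace, M.det)) ''
      closedBall 0 1 := by
    ext x
    simp [pentablock, matOpNorm_eq_norm, eq_comm]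
  rw [this]
  exact (isCompact_closedBall _ _).image (by fun_prop)

lemma csSup_image_le_of_forall_exists {α β : Type*} {s : Set α} {t : Set β} {f : α → ℝ}
    {g : β → ℝ} (hs : s.Nonempty) (ht : BddAbove (g '' t)) (h : ∀ x ∈ s, ∃ y ∈ t, g y = f x) :
    sSup (f '' s) ≤ sSup (g '' t) :=
  csSup_le (hs.image f) fun _ ⟨x, hx, hfx⟩ =>
    let ⟨y, hy, hgy⟩ := h x hx
    le_csSup ht ⟨y, hy, hgy.trans hfx⟩

lemma supAbs2_zeroSlice_le (f : MvPolynomial (Fin 3) ℂ) :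
    supAbs2 symBidisc (zeroSlice f) ≤ supAbs3 pentablock f :=
  csSup_image_le_of_forall_exists ⟨(0, 0), 0, 0, by simp, by simp, by simp⟩
    (isCompact_pentablock.bddAbove_image
      ((continuous_eval f).comp (by fun_prop)).norm.continuousOn)
    fun ⟨t, d⟩ h =>
      ⟨(0, t, d), zero_mem_pentablock_of_mem_symBidisc h, by simp [eval_zeroSlice]⟩

lemma supAbs3_rename_succ_le (g : MvPolynomial (Fin 2) ℂ) :
    supAbs3 pentablock (rename Fin.succ g) ≤ supAbs2 symBidisc g :=
  csSup_image_le_of_forall_exists ⟨(0, 0, 0), 0, by simp [matOpNorm_eq_norm], by simp⟩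
    (isCompact_symBidisc.bddAbove_image
      ((continuous_eval g).comp (by fun_prop)).norm.continuousOn)
    fun ⟨_, t, d⟩ h =>
      ⟨(t, d), mem_symBidisc_of_mem_pentablock h, by rw [eval_rename]; rfl⟩

theorem stmt4_general {H : Type*} [NormedAddCommGroup H] [InnerProductSpace ℂ H]
    (S P : H →L[ℂ] H) :
    IsGammaContraction S P ↔ IsPContraction (0 : H →L[ℂ] H) S P := by
  constructor
  · rintro ⟨hSP, hvN⟩
    refine ⟨Commute.zero_left S, Commute.zero_left P, hSP, fun f => ?_⟩
    rw [opEval3_zero_left]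
    exact (hvN _).trans (supAbs2_zeroSlice_le f)
  · rintro ⟨-, -, hSP, hvN⟩
    refine ⟨hSP, fun g => ?_⟩
    rw [← opEval3_rename_succ 0 S P g]
    exact (hvN _).trans (supAbs3_rename_succ_le g)

theorem stmt4 {H : Type*} [NormedAddCommGroup H] [InnerProductSpace ℂ H] [CompleteSpace H]
    (S P : H →L[ℂ] H) (hSP : Commute S P) :
    IsGammaContraction S P ↔ IsPContraction (0 : H →L[ℂ] H) S P :=
  stmt4_general S P
end
end

section
/- If (a,s,p) ∈ 𝔓̄ (the closed pentablock), then |a|² + |s|²/4 ≤ 1; equivalently, (a, s/2) belongs to the closed biball 𝔹̄₂. -/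
/-! Every column and every row of a matrix has Euclidean norm at most its operator norm.
For a 2×2 matrix, adding the bounds for column 0 and row 1 (both through `A 1 0`) gives
`2‖A 1 0‖² + ‖A 0 0‖² + ‖A 1 1‖² ≤ 2‖A‖²`, and `‖tr A‖² ≤ 2(‖A 0 0‖² + ‖A 1 1‖²)`
by the triangle inequality and the quadratic-mean inequality. -/

open ContinuousLinearMap

noncomputable section

/-- The closed biball 𝔹̄₂ ⊆ ℂ². -/
def closedBiball : Set (ℂ × ℂ) :=
  {z | ‖z.1‖ ^ 2 + ‖z.2‖ ^ 2 ≤ 1}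

open scoped Matrix.Norms.L2Operator

namespace Matrix

variable {𝕜 m n : Type*} [RCLike 𝕜] [Fintype m] [Fintype n] [DecidableEq n]

theorem sum_norm_sq_col_le_l2_opNorm_sq (A : Matrix m n 𝕜) (j : n) :
    ∑ i, ‖A i j‖ ^ 2 ≤ ‖A‖ ^ 2 := by
  have hcol := A.l2_opNorm_mulVec (EuclideanSpace.single j 1)
  simp only [PiLp.norm_single, norm_one, mul_one] at hcol
  simpa [EuclideanSpace.norm_sq_eq, mulVec_single] using pow_le_pow_left₀ (norm_nonneg _) hcol 2

theorem sum_norm_sq_row_le_l2_opNorm_sq [DecidableEq m] (A : Matrix m n 𝕜) (i : m) :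
    ∑ j, ‖A i j‖ ^ 2 ≤ ‖A‖ ^ 2 := by
  simpa [l2_opNorm_conjTranspose] using Aᴴ.sum_norm_sq_col_le_l2_opNorm_sq i

theorem norm_sq_add_norm_trace_sq_div_four_le_l2_opNorm_sq (A : Matrix (Fin 2) (Fin 2) 𝕜) :
    ‖A 1 0‖ ^ 2 + ‖A.trace‖ ^ 2 / 4 ≤ ‖A‖ ^ 2 := by
  have hcol := A.sum_norm_sq_col_le_l2_opNorm_sq 0
  have hrow := A.sum_norm_sq_row_le_l2_opNorm_sq 1
  simp only [Fin.sum_univ_two] at hcol hrow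
  have htrace : ‖A.trace‖ ≤ ‖A 0 0‖ + ‖A 1 1‖ := by
    rw [trace_fin_two]
    exact norm_add_le _ _
  have htrace_sq : ‖A.trace‖ ^ 2 ≤ (‖A 0 0‖ + ‖A 1 1‖) ^ 2 :=
    pow_le_pow_left₀ (norm_nonneg _) htrace 2
  nlinarith [sq_nonneg (‖A 0 0‖ - ‖A 1 1‖)]

end Matrix

theorem stmt6 (a s p : ℂ) (h : (a, s, p) ∈ pentablock) :
    ‖a‖ ^ 2 + ‖s‖ ^ 2 / 4 ≤ 1 ∧ (a, s / 2) ∈ closedBiball := by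
  obtain ⟨M, hM, heq⟩ := h
  obtain ⟨rfl, rfl, -⟩ : a = M 1 0 ∧ s = M.trace ∧ p = M.det := by simpa using heq
  rw [matOpNorm, Matrix.l2_opNorm_toEuclideanCLM] at hM
  have hM_sq : ‖M‖ ^ 2 ≤ 1 := pow_le_one₀ (norm_nonneg _) hM
  have hbound := (M.norm_sq_add_norm_trace_sq_div_four_le_l2_opNorm_sq).trans hM_sq
  refine ⟨hbound, ?_⟩
  have hhalf : ‖M.trace / 2‖ ^ 2 = ‖M.trace‖ ^ 2 / 4 := by
    rw [norm_div, div_pow]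
    norm_num
  simpa only [closedBiball, Set.mem_ofPred_eq, hhalf] using hbound
end
end

section
/- For complex numbers a and s, one has (a, s/2) ∈ 𝔹̄₂ (i.e. |a|² + |s|²/4 ≤ 1) if and only if there exists p ∈ ℂ with |p| = 1 such that (a,s,p) ∈ 𝔓̄. -/
open ContinuousLinearMap

noncomputable section

/-!
A matrix `!![α, -conj β * u; β, conj α * u]` with `‖α‖² + ‖β‖² = 1` and `‖u‖ = 1` is unitary, with
determinant `u` and trace `α + conj α * u`. Writing `s = ‖s‖ e` with `‖e‖ = 1` and taking `u = e²`,
`α = e w` with `re w = ‖s‖ / 2` and `‖w‖² = 1 - ‖a‖²` makes the trace `e (w + conj w) = s`.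

Conversely, the columns of a contraction `M` have norm at most `1`, while `‖det M‖ = 1` forces
`1 ≤ ‖m₀₀‖‖m₁₁‖ + ‖m₁₀‖‖m₀₁‖`. Together these give
`(‖m₀₀‖ - ‖m₁₁‖)² + (‖m₁₀‖ - ‖m₀₁‖)² ≤ 0`, so
`‖m₁₀‖² + ‖tr M / 2‖² ≤ ‖m₁₀‖² + ‖m₀₀‖² ≤ 1`.
-/

open scoped Matrix Matrix.Norms.L2Operator ComplexConjugate

theorem Matrix.sum_norm_sq_apply_le_l2_opNorm_sq {m n 𝕜 : Type*} [RCLike 𝕜] [Fintype m]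
    [Fintype n] [DecidableEq n] (A : Matrix m n 𝕜) (j : n) :
    ∑ i, ‖A i j‖ ^ 2 ≤ ‖A‖ ^ 2 := by
  have h := A.l2_opNorm_mulVec (PiLp.single 2 j 1)
  rw [PiLp.norm_single, norm_one, mul_one] at h
  have hcol : ‖(EuclideanSpace.equiv m 𝕜).symm (A *ᵥ (PiLp.single 2 j (1 : 𝕜)).ofLp)‖ ^ 2 =
      ∑ i, ‖A i j‖ ^ 2 := by
    simp [EuclideanSpace.norm_sq_eq]
  rw [← hcol]
  gcongr

theorem sq_add_sq_half_le_one_of_one_le_mul_add_mul {x y z w : ℝ} (hxz : x ^ 2 + z ^ 2 ≤ 1)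
    (hwy : w ^ 2 + y ^ 2 ≤ 1) (h : 1 ≤ x * y + z * w) : z ^ 2 + ((x + y) / 2) ^ 2 ≤ 1 := by
  nlinarith [sq_nonneg (x - y), sq_nonneg (z - w)]

theorem mem_unitaryGroup_fin_two {α β u : ℂ} (hαβ : ‖α‖ ^ 2 + ‖β‖ ^ 2 = 1) (hu : ‖u‖ = 1) :
    !![α, -conj β * u; β, conj α * u] ∈ Matrix.unitaryGroup (Fin 2) ℂ := by
  have hαβ' : α * conj α + β * conj β = 1 := by
    simp only [Complex.mul_conj']; exact_mod_cast hαβ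
  have hu' : u * conj u = 1 := by simp [Complex.mul_conj', hu]
  rw [Matrix.mem_unitaryGroup_iff]
  ext i j
  fin_cases i <;> fin_cases j <;> simp [Matrix.mul_apply, Fin.sum_univ_two] <;> grind

theorem norm_sq_apply_one_zero_add_norm_sq_trace_half_le_one {M : Matrix (Fin 2) (Fin 2) ℂ}
    (hM : ‖M‖ ≤ 1) (hdet : ‖M.det‖ = 1) : ‖M 1 0‖ ^ 2 + ‖M.trace / 2‖ ^ 2 ≤ 1 := by
  have hcol (j : Fin 2) : ‖M 0 j‖ ^ 2 + ‖M 1 j‖ ^ 2 ≤ 1 := by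
    simpa [Fin.sum_univ_two] using
      (M.sum_norm_sq_apply_le_l2_opNorm_sq j).trans (pow_le_one₀ (norm_nonneg M) hM)
  have hdet' : 1 ≤ ‖M 0 0‖ * ‖M 1 1‖ + ‖M 1 0‖ * ‖M 0 1‖ := by
    calc 1 = ‖M 0 0 * M 1 1 - M 0 1 * M 1 0‖ := by rw [← hdet, Matrix.det_fin_two]
      _ ≤ ‖M 0 0 * M 1 1‖ + ‖M 0 1 * M 1 0‖ := norm_sub_le _ _
      _ = _ := by simp only [norm_mul, mul_comm ‖M 0 1‖]
  have htr : ‖M.trace / 2‖ ≤ (‖M 0 0‖ + ‖M 1 1‖) / 2 := by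
    rw [Matrix.trace_fin_two, norm_div, Complex.norm_two]
    gcongr
    exact norm_add_le _ _
  calc ‖M 1 0‖ ^ 2 + ‖M.trace / 2‖ ^ 2 ≤ ‖M 1 0‖ ^ 2 + ((‖M 0 0‖ + ‖M 1 1‖) / 2) ^ 2 := by gcongr
    _ ≤ 1 := sq_add_sq_half_le_one_of_one_le_mul_add_mul (hcol 0) (hcol 1) hdet'

theorem exists_mem_unitaryGroup_apply_one_zero_trace {a s : ℂ} (h : ‖a‖ ^ 2 + ‖s / 2‖ ^ 2 ≤ 1) :
    ∃ U ∈ Matrix.unitaryGroup (Fin 2) ℂ, U 1 0 = a ∧ U.trace = s := by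
  rw [norm_div, Complex.norm_two] at h
  set e := Complex.exp (s.arg * Complex.I)
  have he : ‖e‖ = 1 := Complex.norm_exp_ofReal_mul_I _
  set t := √(1 - ‖a‖ ^ 2 - (‖s‖ / 2) ^ 2)
  set w : ℂ := (‖s‖ / 2 : ℝ) + t * Complex.I
  have hw_re : w.re = ‖s‖ / 2 := by simp [w]
  have hw : ‖e * w‖ ^ 2 + ‖a‖ ^ 2 = 1 := by
    rw [norm_mul, he, one_mul, Complex.sq_norm, Complex.normSq_add_mul_I,
      Real.sq_sqrt (by linarith)]
    ring
  refine ⟨_, mem_unitaryGroup_fin_two hw (u := e ^ 2) (by simp [he]), rfl, ?_⟩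
  have hee : conj e * e = 1 := by simp [Complex.conj_mul', he]
  rw [Matrix.trace_fin_two_of]
  calc e * w + conj (e * w) * e ^ 2 = e * (w + conj w) := by
        rw [map_mul]; linear_combination (e * conj w) * hee
    _ = ‖s‖ * e := by rw [Complex.add_conj, hw_re]; push_cast; ring
    _ = s := Complex.norm_mul_exp_arg_mul_I s

theorem stmt8 (a s : ℂ) :
    (a, s / 2) ∈ closedBiball ↔ ∃ p : ℂ, ‖p‖ = 1 ∧ (a, s, p) ∈ pentablock := by
  -- `matOpNorm M` is by definition `‖M‖` for the L2 operator norm on matrices.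
  constructor
  · intro h
    obtain ⟨U, hU, rfl, rfl⟩ := exists_mem_unitaryGroup_apply_one_zero_trace h
    exact ⟨U.det, CStarRing.norm_of_mem_unitary (Matrix.det_of_mem_unitary hU), U,
      (CStarRing.norm_of_mem_unitary hU).le, rfl⟩
  · rintro ⟨p, hp, M, hM, heq⟩
    simp only [Prod.mk.injEq] at heq
    obtain ⟨rfl, rfl, rfl⟩ := heq
    exact norm_sq_apply_one_zero_add_norm_sq_trace_half_le_one hM hp
end
end

section
/- The point (a,s,p) = (√3/2, 1, 0) satisfies (a, s/2) ∈ 𝔹̄₂ (indeed |a|² + |s|²/4 = 1) and (s,p) = (1,0) ∈ Γ, yet (a,s,p) ∉ 𝔓̄. In particular, the converse of the implication '(a,s,p) ∈ 𝔓̄ ⟹ (a,s/2) ∈ 𝔹̄₂ and (s,p) ∈ Γ' fails. -/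
/-!
If `M` is a contraction with `M 1 0 = √3/2`, then the first column and the second row of `M`
are unit-bounded, so `‖M 0 0‖, ‖M 1 1‖ ≤ 1/2`; together with `tr M = 1` this forces
`M 0 0 = M 1 1 = 1/2`, and `det M = 0` then gives `M 0 1 = √3/6`. This rank-one matrix maps
`(3, √3)`, of squared norm `12`, to `(2, 2√3)`, of squared norm `16`, so `‖M‖ > 1`.
-/

open ContinuousLinearMap

noncomputable section

open scoped Matrix Matrix.Norms.L2Operator

namespace Matrix

variable {𝕜 m n : Type*} [RCLike 𝕜] [Fintype m] [Fintype n] [DecidableEq n]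

theorem sum_norm_sq_mulVec_le_of_l2_opNorm_le_one {A : Matrix m n 𝕜} (hA : ‖A‖ ≤ 1)
    (x : n → 𝕜) : ∑ i, ‖(A *ᵥ x) i‖ ^ 2 ≤ ∑ j, ‖x j‖ ^ 2 := by
  have h : ‖(EuclideanSpace.equiv m 𝕜).symm (A *ᵥ x)‖ ≤ ‖(EuclideanSpace.equiv n 𝕜).symm x‖ :=
    (A.l2_opNorm_mulVec _).trans (mul_le_of_le_one_left (norm_nonneg _) hA)
  simpa [EuclideanSpace.norm_sq_eq] using pow_le_pow_left₀ (norm_nonneg _) h 2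

theorem sum_norm_sq_col_le_of_l2_opNorm_le_one {A : Matrix m n 𝕜} (hA : ‖A‖ ≤ 1) (j : n) :
    ∑ i, ‖A i j‖ ^ 2 ≤ 1 := by
  simpa [mulVec_single_one, Pi.single_apply, apply_ite] using
    sum_norm_sq_mulVec_le_of_l2_opNorm_le_one hA (Pi.single j 1)

theorem sum_norm_sq_row_le_of_l2_opNorm_le_one [DecidableEq m] {A : Matrix m n 𝕜}
    (hA : ‖A‖ ≤ 1) (i : m) : ∑ j, ‖A i j‖ ^ 2 ≤ 1 := by
  simpa using sum_norm_sq_col_le_of_l2_opNorm_le_one (A := Aᴴ) (by rwa [l2_opNorm_conjTranspose]) i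

end Matrix

theorem Complex.eq_of_norm_le_of_add_eq {a d : ℂ} {r s : ℝ} (ha : ‖a‖ ≤ r) (hd : ‖d‖ ≤ s)
    (h : a + d = r + s) : a = r := by
  have hre : a.re + d.re = r + s := by simpa using congrArg Complex.re h
  have hra : a.re = ‖a‖ := by linarith [a.re_le_norm, d.re_le_norm]
  rw [Complex.eq_coe_norm_of_nonneg (Complex.re_eq_norm.mp hra), ← hra]
  congr 1
  linarith [a.re_le_norm, d.re_le_norm]

theorem norm_sqrt_three_div_two_sq : ‖((√3 / 2 : ℝ) : ℂ)‖ ^ 2 = 3 / 4 := by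
  rw [Complex.norm_real, Real.norm_eq_abs, sq_abs, div_pow, Real.sq_sqrt zero_le_three]
  norm_num

theorem one_lt_l2_opNorm_of_entry_trace_det (M : Matrix (Fin 2) (Fin 2) ℂ)
    (hc : M 1 0 = ((√3 / 2 : ℝ) : ℂ)) (htr : M.trace = 1) (hdet : M.det = 0) : 1 < ‖M‖ := by
  by_contra! hM
  have h3 : √3 ^ 2 = 3 := Real.sq_sqrt zero_le_three
  have h3' : ((√3 : ℝ) : ℂ) ^ 2 = 3 := by exact_mod_cast h3
  have hcol := Matrix.sum_norm_sq_col_le_of_l2_opNorm_le_one hM 0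
  have hrow := Matrix.sum_norm_sq_row_le_of_l2_opNorm_le_one hM 1
  simp only [Fin.sum_univ_two, hc, norm_sqrt_three_div_two_sq] at hcol hrow
  have ha : ‖M 0 0‖ ≤ 1 / 2 := by nlinarith [norm_nonneg (M 0 0)]
  have hd : ‖M 1 1‖ ≤ 1 / 2 := by nlinarith [norm_nonneg (M 1 1)]
  rw [Matrix.trace_fin_two] at htr
  have ha' : M 0 0 = 1 / 2 := by
    simpa using Complex.eq_of_norm_le_of_add_eq ha hd (by rw [htr]; push_cast; ring)
  have hd' : M 1 1 = 1 / 2 := by linear_combination htr - ha'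
  have hb : M 0 1 = ((√3 / 6 : ℝ) : ℂ) := by
    rw [Matrix.det_fin_two, ha', hd', hc] at hdet
    push_cast at hdet ⊢
    linear_combination (-2 / 3 * ((√3 : ℝ) : ℂ)) * hdet - M 0 1 / 3 * h3'
  have hMv : M *ᵥ ![3, ((√3 : ℝ) : ℂ)] = ![2, ((2 * √3 : ℝ) : ℂ)] := by
    ext i; fin_cases i
    · simp [Matrix.mulVec, dotProduct, Fin.sum_univ_two, ha', hb]
      linear_combination (1 / 6) * h3'
    · simp [Matrix.mulVec, dotProduct, Fin.sum_univ_two, hc, hd']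
      ring
  have hv := Matrix.sum_norm_sq_mulVec_le_of_l2_opNorm_le_one hM ![3, ((√3 : ℝ) : ℂ)]
  rw [hMv] at hv
  simp [Fin.sum_univ_two, Complex.norm_real, h3, abs_of_nonneg (Real.sqrt_nonneg 3)] at hv
  nlinarith

theorem stmt11 :
    ((((Real.sqrt 3 / 2 : ℝ) : ℂ), (1 : ℂ) / 2) ∈ closedBiball ∧
      ‖(((Real.sqrt 3 / 2 : ℝ) : ℂ))‖ ^ 2 + ‖(1 : ℂ)‖ ^ 2 / 4 = 1) ∧
    ((1 : ℂ), (0 : ℂ)) ∈ symBidisc ∧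
    ((((Real.sqrt 3 / 2 : ℝ) : ℂ)), (1 : ℂ), (0 : ℂ)) ∉ pentablock := by
  refine ⟨⟨?_, ?_⟩, ⟨1, 0, by simp, by simp, by simp⟩, ?_⟩
  · show ‖_‖ ^ 2 + ‖_‖ ^ 2 ≤ 1
    rw [norm_sqrt_three_div_two_sq]
    norm_num
  · rw [norm_sqrt_three_div_two_sq]
    norm_num
  · rintro ⟨M, hM, hx⟩
    simp only [Prod.mk.injEq] at hx
    obtain ⟨hc, htr, hdet⟩ := hx
    have hM' : ‖M‖ ≤ 1 := hM
    exact (one_lt_l2_opNorm_of_entry_trace_det M hc.symm htr.symm hdet.symm).not_ge hM'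
end
end
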